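/- arXiv:2309.14596 — 4 statements merged into one kernel-verified Lean document; each statement's English description precedes it below -/
import Mathlib

section
/- Under the setup of the previous statement (SNRs a_m/s_m nonincreasing for m ≥ 2), the gap between the optimal risk over the monotone set Γ (with γ₁ = 1) and the optimal risk over the hypercube [0,1]^M equals exactly s₁²/(a₁ + s₁): min_{γ ∈ Γ} R(γ) − min_{γ ∈ [0,1]^M} R(γ) = s₁ − a₁s₁/(a₁+s₁) = s₁²/(a₁+s₁). -/
/-!
Each summand `a (1 - γ)² + s γ²` of the risk is minimised over all of `ℝ` at `γ = a / (a + s)`,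
with minimum `a s / (a + s)`, since `(a + s) (a (1 - γ)² + s γ²) - a s = ((a + s) γ - a)²`.
These coordinatewise minimisers lie in `[0, 1]`, and for `m ≥ 2` they are nonincreasing because
`a / (a + s)` is an increasing function of the SNR `a / s`. Hence the constraints are inactive,
except `γ₁ = 1` in `Γ`, which replaces the first summand's minimum `a₁ s₁ / (a₁ + s₁)` by `s₁`.
-/

open Finset

section Coordinate

variable {a s : ℝ}

lemma mul_div_add_le_add_mul_sq (h : 0 < a + s) (γ : ℝ) :
    a * s / (a + s) ≤ a * (1 - γ) ^ 2 + s * γ ^ 2 := by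
  rw [div_le_iff₀ h]
  nlinarith [sq_nonneg ((a + s) * γ - a)]

lemma add_mul_sq_div_add_eq (h : a + s ≠ 0) :
    a * (1 - a / (a + s)) ^ 2 + s * (a / (a + s)) ^ 2 = a * s / (a + s) := by
  field_simp
  ring

lemma div_add_mem_Icc (ha : 0 ≤ a) (hs : 0 ≤ s) : a / (a + s) ∈ Set.Icc 0 1 :=
  ⟨by positivity, div_le_one_of_le₀ (by linarith) (by positivity)⟩

lemma div_add_le_div_add_of_div_le_div {a' s' : ℝ} (hs : 0 < s) (hs' : 0 < s')
    (h : 0 < a + s) (h' : 0 < a' + s') (hr : a' / s' ≤ a / s) :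
    a' / (a' + s') ≤ a / (a + s) := by
  rw [div_le_div_iff₀ hs' hs] at hr
  rw [div_le_div_iff₀ h' h]
  linarith

lemma sub_mul_div_add_eq (h : a + s ≠ 0) : s - a * s / (a + s) = s ^ 2 / (a + s) := by
  field_simp
  ring

end Coordinate

lemma isLeast_image_sum_of_le {ι α : Type*} {I : Finset ι} {S : Set (ι → α)}
    (f : ι → α → ℝ) (b : ι → ℝ) (hle : ∀ γ ∈ S, ∀ i ∈ I, b i ≤ f i (γ i))
    (γ₀ : ι → α) (hγ₀ : γ₀ ∈ S) (heq : ∀ i ∈ I, f i (γ₀ i) = b i) :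
    IsLeast ((fun γ => ∑ i ∈ I, f i (γ i)) '' S) (∑ i ∈ I, b i) :=
  ⟨⟨γ₀, hγ₀, sum_congr rfl heq⟩, by
    rintro _ ⟨γ, hγ, rfl⟩
    exact sum_le_sum (hle γ hγ)⟩

section Risk

variable {M : ℕ} {a s : ℕ → ℝ}

def risk (M : ℕ) (a s γ : ℕ → ℝ) : ℝ :=
  ∑ m ∈ Icc 1 M, (a m * (1 - γ m) ^ 2 + s m * γ m ^ 2)

/-- The set `Γ` of the paper. -/
def monotoneWeights (M : ℕ) : Set (ℕ → ℝ) :=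
  {γ | γ 1 = 1 ∧ (∀ m, 1 ≤ m → m < M → γ (m + 1) ≤ γ m) ∧ 0 ≤ γ M}

def cubeWeights (M : ℕ) : Set (ℕ → ℝ) :=
  {γ | ∀ m, 1 ≤ m → m ≤ M → 0 ≤ γ m ∧ γ m ≤ 1}

theorem isLeast_risk_image_cubeWeights (ha : ∀ m ∈ Icc 1 M, 0 ≤ a m)
    (hs : ∀ m ∈ Icc 1 M, 0 < s m) :
    IsLeast (risk M a s '' cubeWeights M) (∑ m ∈ Icc 1 M, a m * s m / (a m + s m)) := by
  have hpos (m) (hm : m ∈ Icc 1 M) : 0 < a m + s m := add_pos_of_nonneg_of_pos (ha m hm) (hs m hm)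
  refine isLeast_image_sum_of_le (fun m x => a m * (1 - x) ^ 2 + s m * x ^ 2) _
    (fun _ _ m hm => mul_div_add_le_add_mul_sq (hpos m hm) _) (fun m => a m / (a m + s m))
    (fun m h1 hM => div_add_mem_Icc (ha m (mem_Icc.2 ⟨h1, hM⟩)) (hs m (mem_Icc.2 ⟨h1, hM⟩)).le)
    (fun m hm => add_mul_sq_div_add_eq (hpos m hm).ne')

theorem ite_div_add_mem_monotoneWeights (hM : 1 ≤ M) (ha : ∀ m ∈ Icc 1 M, 0 ≤ a m)
    (hs : ∀ m ∈ Icc 1 M, 0 < s m)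
    (hsnr : ∀ l, 2 ≤ l → l ≤ M - 1 → a (l + 1) / s (l + 1) ≤ a l / s l) :
    (fun m => if m = 1 then 1 else a m / (a m + s m)) ∈ monotoneWeights M := by
  set γ₀ : ℕ → ℝ := fun m => if m = 1 then 1 else a m / (a m + s m)
  have mem (m) (h1 : 1 ≤ m) (hM : m ≤ M) : m ∈ Icc 1 M := mem_Icc.2 ⟨h1, hM⟩
  have hpos (m) (hm : m ∈ Icc 1 M) : 0 < a m + s m := add_pos_of_nonneg_of_pos (ha m hm) (hs m hm)
  refine ⟨if_pos rfl, fun m h1 hm => ?_, ?_⟩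
  · have hm1 : m + 1 ∈ Icc 1 M := mem (m + 1) (by omega) hm
    rw [show γ₀ (m + 1) = a (m + 1) / (a (m + 1) + s (m + 1)) from if_neg (by omega)]
    rcases h1.eq_or_lt with rfl | h2
    · exact (div_add_mem_Icc (ha 2 hm1) (hs 2 hm1).le).2.trans (if_pos rfl).ge
    · have hm0 : m ∈ Icc 1 M := mem m h1 hm.le
      rw [show γ₀ m = a m / (a m + s m) from if_neg h2.ne']
      exact div_add_le_div_add_of_div_le_div (hs m hm0) (hs _ hm1) (hpos m hm0) (hpos _ hm1)
        (hsnr m h2 (by omega))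
  · by_cases h : M = 1
    · simp [γ₀, h]
    · simp only [γ₀, if_neg h]
      exact (div_add_mem_Icc (ha M (mem M hM le_rfl)) (hs M (mem M hM le_rfl)).le).1

theorem isLeast_risk_image_monotoneWeights (hM : 1 ≤ M) (ha : ∀ m ∈ Icc 1 M, 0 ≤ a m)
    (hs : ∀ m ∈ Icc 1 M, 0 < s m)
    (hsnr : ∀ l, 2 ≤ l → l ≤ M - 1 → a (l + 1) / s (l + 1) ≤ a l / s l) :
    IsLeast (risk M a s '' monotoneWeights M)
      (s 1 + ∑ m ∈ Icc 2 M, a m * s m / (a m + s m)) := by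
  have hpos (m) (hm : m ∈ Icc 1 M) : 0 < a m + s m := add_pos_of_nonneg_of_pos (ha m hm) (hs m hm)
  let b (m : ℕ) : ℝ := if m = 1 then s 1 else a m * s m / (a m + s m)
  have hb : ∑ m ∈ Icc 1 M, b m = s 1 + ∑ m ∈ Icc 2 M, a m * s m / (a m + s m) := by
    rw [← add_sum_Ioc_eq_sum_Icc hM, ← Icc_add_one_left_eq_Ioc]
    refine congrArg₂ (· + ·) (if_pos rfl) (sum_congr rfl fun m hm => if_neg ?_)
    have := (mem_Icc.1 hm).1
    omega
  let γ₀ (m : ℕ) : ℝ := if m = 1 then 1 else a m / (a m + s m)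
  rw [← hb]
  refine isLeast_image_sum_of_le (fun m x => a m * (1 - x) ^ 2 + s m * x ^ 2) b
    (fun γ hγ m hm => ?_) γ₀ (ite_div_add_mem_monotoneWeights hM ha hs hsnr) (fun m hm => ?_)
  · by_cases h : m = 1
    · subst h
      simp [b, hγ.1]
    · simp only [b, if_neg h]
      exact mul_div_add_le_add_mul_sq (hpos m hm) _
  · by_cases h : m = 1
    · subst h
      simp [b, γ₀]
    · simp only [b, γ₀, if_neg h]
      exact add_mul_sq_div_add_eq (hpos m hm).ne'

end Risk

theorem stmt8 (M : ℕ) (hM : 2 ≤ M) (a s : ℕ → ℝ)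
    (ha : ∀ m ∈ Finset.Icc 1 M, 0 ≤ a m) (hs : ∀ m ∈ Finset.Icc 1 M, 0 < s m)
    (hsnr : ∀ l, 2 ≤ l → l ≤ M - 1 → a (l+1) / s (l+1) ≤ a l / s l) :
    IsLeast
      ((fun γ : ℕ → ℝ => ∑ m ∈ Finset.Icc 1 M, (a m * (1 - γ m)^2 + s m * γ m^2)) ''
        {γ | γ 1 = 1 ∧ (∀ m, 1 ≤ m → m < M → γ (m+1) ≤ γ m) ∧ 0 ≤ γ M})
      (s 1 + ∑ m ∈ Finset.Icc 2 M, a m * s m / (a m + s m)) ∧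
    IsLeast
      ((fun γ : ℕ → ℝ => ∑ m ∈ Finset.Icc 1 M, (a m * (1 - γ m)^2 + s m * γ m^2)) ''
        {γ | ∀ m, 1 ≤ m → m ≤ M → 0 ≤ γ m ∧ γ m ≤ 1})
      (∑ m ∈ Finset.Icc 1 M, a m * s m / (a m + s m)) ∧
    (s 1 + ∑ m ∈ Finset.Icc 2 M, a m * s m / (a m + s m))
      - ∑ m ∈ Finset.Icc 1 M, a m * s m / (a m + s m)
      = s 1 ^ 2 / (a 1 + s 1) := by
  have hM1 : 1 ≤ M := by omega
  have h1 : 1 ∈ Icc 1 M := mem_Icc.2 ⟨le_rfl, hM1⟩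
  refine ⟨isLeast_risk_image_monotoneWeights hM1 ha hs hsnr,
    isLeast_risk_image_cubeWeights ha hs, ?_⟩
  rw [← add_sum_Ioc_eq_sum_Icc hM1, ← Icc_add_one_left_eq_Ioc, one_add_one_eq_two,
    add_sub_add_right_eq_sub, sub_mul_div_add_eq (add_pos_of_nonneg_of_pos (ha 1 h1) (hs 1 h1)).ne']
end

section
/- Fix integers 0 = k₀ < k₁ < ⋯ < k_M = p and suppose (k_{m+1} − k_m)/(k_m − k_{m-1}) ≤ 1 + ζ for all 1 ≤ m ≤ M−1, where ζ ≥ 0. Let a₁,...,a_p ≥ 0, let σ² > 0, and for γ ∈ Γ_p = {γ : 1 = γ₁ ≥ ⋯ ≥ γ_p ≥ 0} define R_a(γ) = Σ_{j=1}^p [a_j(1−γ_j)² + σ² γ_j²]. For coarse weights γ̄ ∈ Γ_M define R_M(γ̄) = Σ_{m=1}^M [(Σ_{j=k_{m-1}+1}^{k_m} a_j)(1−γ̄_m)² + (k_m−k_{m-1})σ² γ̄_m²]. Then min_{γ̄ ∈ Γ_M} R_M(γ̄) ≤ (1+ζ) min_{γ ∈ Γ_p} R_a(γ) + k₁σ².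 -/
/-!
Given a fine weight sequence `γ ∈ Γ_p`, give block `m` the fine weight `γ̄_m = γ_{k_{m-1}+1}` at
its first index. Since `γ` is nonincreasing, `γ_j ≤ γ̄_m ≤ 1` on block `m`, so the coarse bias is at
most the fine bias. On block `m - 1` instead `γ̄_m ≤ γ_j`, so for `m ≥ 2` the coarse variance
`(k_m - k_{m-1}) σ² γ̄_m²` is at most `(1 + ζ)` times the fine variance of block `m - 1`, while the
first block costs `k₁ σ²`. Minimising over `γ` gives the bound.
-/

open Finset

theorem Finset.sum_Icc_sum_Ioc_of_monotoneOn {β : Type*} [AddCommMonoid β] (f : ℕ → β)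
    {k : ℕ → ℕ} {M : ℕ} (hk : MonotoneOn k (Set.Iic M)) :
    ∑ m ∈ Icc 1 M, ∑ j ∈ Ioc (k (m - 1)) (k m), f j = ∑ j ∈ Ioc (k 0) (k M), f j := by
  induction M with
  | zero => simp
  | succ n ih =>
    rw [sum_Icc_succ_top (by omega), ih (hk.mono (Set.Iic_subset_Iic.2 n.le_succ)),
      Nat.add_sub_cancel, sum_Ioc_consecutive _ (hk (by simp) (by simp) n.zero_le)
        (hk (by simp) (by simp) n.le_succ)]

theorem le_mul_csInf_add {S : Set ℝ} (hS : S.Nonempty) {c α β : ℝ} (hα : 0 < α)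
    (h : ∀ y ∈ S, c ≤ α * y + β) : c ≤ α * sInf S + β := by
  have : (c - β) / α ≤ sInf S :=
    le_csInf hS fun y hy => (div_le_iff₀' hα).2 (by linarith [h y hy])
  rw [div_le_iff₀' hα] at this
  linarith

theorem sub_mul_sq_le_sum_Ioc_sq {i j : ℕ} (hij : i ≤ j) {x : ℝ} {γ : ℕ → ℝ} (hx : 0 ≤ x)
    (h : ∀ l ∈ Ioc i j, x ≤ γ l) : ((j : ℝ) - i) * x ^ 2 ≤ ∑ l ∈ Ioc i j, γ l ^ 2 := by
  have := card_nsmul_le_sum (Ioc i j) (γ · ^ 2) (x ^ 2) fun l hl => pow_le_pow_left₀ hx (h l hl) 2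
  simpa [Nat.cast_sub hij] using this

/-- `Γ_r`, with weights indexed from `1`. -/
def nestedWeights (r : ℕ) : Set (ℕ → ℝ) :=
  {γ | γ 1 = 1 ∧ (∀ j, 1 ≤ j → j < r → γ (j + 1) ≤ γ j) ∧ 0 ≤ γ r}

/-- `R_a`, with `v = σ²`. -/
def fineRisk (a : ℕ → ℝ) (v : ℝ) (p : ℕ) (γ : ℕ → ℝ) : ℝ :=
  ∑ j ∈ Icc 1 p, (a j * (1 - γ j) ^ 2 + v * γ j ^ 2)

/-- `R_M`, with `v = σ²`. -/
def coarseRisk (a : ℕ → ℝ) (v : ℝ) (k : ℕ → ℕ) (M : ℕ) (γ : ℕ → ℝ) : ℝ :=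
  ∑ m ∈ Icc 1 M, ((∑ j ∈ Icc (k (m - 1) + 1) (k m), a j) * (1 - γ m) ^ 2
    + ((k m : ℝ) - (k (m - 1) : ℝ)) * v * γ m ^ 2)

def coarseWeights (k : ℕ → ℕ) (γ : ℕ → ℝ) (m : ℕ) : ℝ := γ (k (m - 1) + 1)

theorem antitoneOn_of_mem_nestedWeights {r : ℕ} {γ : ℕ → ℝ} (hγ : γ ∈ nestedWeights r) :
    AntitoneOn γ (Set.Icc 1 r) :=
  antitoneOn_of_add_one_le Set.ordConnected_Icc fun j _ hj hj' => hγ.2.1 j hj.1 (by grind)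

section Blocks

variable {k : ℕ → ℕ} {M : ℕ}

theorem Icc_block_subset (hk : MonotoneOn k (Set.Iic M)) {m : ℕ} (hm : m ≤ M) :
    Icc (k (m - 1) + 1) (k m) ⊆ Icc 1 (k M) := fun j hj => by
  have := hk (by simpa using hm) (by simp) hm
  grind

theorem coarseRisk_nonneg {a : ℕ → ℝ} {v : ℝ} (ha : ∀ j ∈ Icc 1 (k M), 0 ≤ a j)
    (hk : MonotoneOn k (Set.Iic M)) (hv : 0 ≤ v) (γ : ℕ → ℝ) : 0 ≤ coarseRisk a v k M γ := by
  refine sum_nonneg fun m hm => ?_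
  have hm' := mem_Icc.1 hm
  have hA : 0 ≤ ∑ j ∈ Icc (k (m - 1) + 1) (k m), a j :=
    sum_nonneg fun j hj => ha j (Icc_block_subset hk hm'.2 hj)
  have hd : (k (m - 1) : ℝ) ≤ k m := by
    exact_mod_cast hk (by simp; omega) (by simpa using hm'.2) (by omega)
  have := sub_nonneg.2 hd
  positivity

theorem coarseWeights_mem (hM : 1 ≤ M) (hk0 : k 0 = 0) (hk : StrictMonoOn k (Set.Iic M))
    {γ : ℕ → ℝ} (hγ : γ ∈ nestedWeights (k M)) : coarseWeights k γ ∈ nestedWeights M := by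
  have hanti := antitoneOn_of_mem_nestedWeights hγ
  have hkM {m : ℕ} (hm : m < M) : k m < k M := hk (by simp; omega) (by simp) hm
  refine ⟨by simpa [coarseWeights, hk0] using hγ.1, fun m hm hmM => ?_, ?_⟩
  · have := hk.monotoneOn (by simp; omega) (by simp; omega) (Nat.sub_le m 1)
    have := hkM hmM
    exact hanti (by simp; omega) (by simp; omega) (by simp; omega)
  · have := hkM (Nat.sub_lt hM one_pos)
    exact hγ.2.2.trans (hanti (by simp; omega) (by simp; omega) (by omega))

theorem sum_blockSum_mul_one_sub_coarseWeights_sq_le {a γ : ℕ → ℝ} (ha : ∀ j ∈ Icc 1 (k M), 0 ≤ a j)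
    (hk0 : k 0 = 0) (hk : MonotoneOn k (Set.Iic M)) (hγ : γ ∈ nestedWeights (k M)) :
    ∑ m ∈ Icc 1 M, (∑ j ∈ Icc (k (m - 1) + 1) (k m), a j) * (1 - coarseWeights k γ m) ^ 2
      ≤ ∑ j ∈ Icc 1 (k M), a j * (1 - γ j) ^ 2 := by
  have hanti := antitoneOn_of_mem_nestedWeights hγ
  calc _ ≤ ∑ m ∈ Icc 1 M, ∑ j ∈ Ioc (k (m - 1)) (k m), a j * (1 - γ j) ^ 2 := by
        refine sum_le_sum fun m hm => ?_
        rw [sum_mul, ← Icc_add_one_left_eq_Ioc]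
        refine sum_le_sum fun j hj => ?_
        have hblock := Icc_block_subset hk (mem_Icc.1 hm).2 hj
        obtain ⟨hj1, hjm⟩ := mem_Icc.1 hj
        obtain ⟨hj0, hjM⟩ := mem_Icc.1 hblock
        have hγj : γ j ≤ coarseWeights k γ m := hanti ⟨by omega, by omega⟩ ⟨hj0, hjM⟩ hj1
        have hγm : coarseWeights k γ m ≤ 1 :=
          hγ.1 ▸ hanti ⟨le_rfl, by omega⟩ ⟨by omega, by omega⟩ (by omega)
        exact mul_le_mul_of_nonneg_left (pow_le_pow_left₀ (by linarith) (by linarith) 2)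
          (ha j hblock)
    _ = _ := by
        rw [sum_Icc_sum_Ioc_of_monotoneOn _ hk, hk0, ← Icc_add_one_left_eq_Ioc, zero_add]

theorem sum_blockLength_mul_coarseWeights_sq_le {c : ℝ} {γ : ℕ → ℝ} (hM : 1 ≤ M)
    (hk0 : k 0 = 0) (hk : StrictMonoOn k (Set.Iic M)) (hc : 0 ≤ c)
    (hratio : ∀ m ∈ Ico 1 M, (k (m + 1) : ℝ) - k m ≤ c * ((k m : ℝ) - k (m - 1)))
    (hγ : γ ∈ nestedWeights (k M)) :
    ∑ m ∈ Icc 1 M, ((k m : ℝ) - k (m - 1)) * coarseWeights k γ m ^ 2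
      ≤ k 1 + c * ∑ j ∈ Icc 1 (k M), γ j ^ 2 := by
  have hanti := antitoneOn_of_mem_nestedWeights hγ
  set F : ℕ → ℝ := fun m => ((k m : ℝ) - k (m - 1)) * coarseWeights k γ m ^ 2
  have hstep : ∀ m ∈ Ico 1 M, F (m + 1) ≤ c * ∑ j ∈ Ioc (k (m - 1)) (k m), γ j ^ 2 := by
    intro m hm
    obtain ⟨hm1, hmM⟩ := mem_Ico.1 hm
    have hkm : k (m - 1) < k m := hk (by simp; omega) (by simp; omega) (by omega)
    have hkM : k m < k M := hk (by simp; omega) (by simp) hmM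
    have hx : 0 ≤ γ (k m + 1) :=
      hγ.2.2.trans (hanti ⟨by omega, by omega⟩ ⟨by omega, le_rfl⟩ (by omega))
    have hblock := sub_mul_sq_le_sum_Ioc_sq (γ := γ) hkm.le hx fun j hj => by
      obtain ⟨hj1, hjm⟩ := mem_Ioc.1 hj
      exact hanti ⟨by omega, by omega⟩ ⟨by omega, by omega⟩ (by omega)
    calc F (m + 1) = ((k (m + 1) : ℝ) - k m) * γ (k m + 1) ^ 2 := rfl
      _ ≤ c * (((k m : ℝ) - k (m - 1)) * γ (k m + 1) ^ 2) := by
        rw [← mul_assoc]; exact mul_le_mul_of_nonneg_right (hratio m hm) (sq_nonneg _)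
      _ ≤ _ := mul_le_mul_of_nonneg_left hblock hc
  calc ∑ m ∈ Icc 1 M, F m = F 1 + ∑ m ∈ Ico 1 M, F (m + 1) := by
        rw [← Ico_add_one_right_eq_Icc, sum_eq_sum_Ico_succ_bot (by omega), sum_Ico_add']
    _ ≤ k 1 + ∑ m ∈ Icc 1 M, c * ∑ j ∈ Ioc (k (m - 1)) (k m), γ j ^ 2 := by
        have hF1 : F 1 = k 1 := by simp [F, coarseWeights, hk0, hγ.1]
        rw [hF1, add_le_add_iff_left]
        exact (sum_le_sum hstep).trans (sum_le_sum_of_subset_of_nonneg Ico_subset_Icc_self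
          fun m _ _ => mul_nonneg hc (sum_nonneg fun j _ => sq_nonneg _))
    _ = _ := by
        rw [← mul_sum, sum_Icc_sum_Ioc_of_monotoneOn _ hk.monotoneOn, hk0,
          ← Icc_add_one_left_eq_Ioc, zero_add]

theorem coarseRisk_coarseWeights_le {a γ : ℕ → ℝ} {v c : ℝ} (hM : 1 ≤ M) (hk0 : k 0 = 0)
    (hk : StrictMonoOn k (Set.Iic M)) (ha : ∀ j ∈ Icc 1 (k M), 0 ≤ a j) (hv : 0 ≤ v)
    (hc : 1 ≤ c) (hratio : ∀ m ∈ Ico 1 M, (k (m + 1) : ℝ) - k m ≤ c * ((k m : ℝ) - k (m - 1)))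
    (hγ : γ ∈ nestedWeights (k M)) :
    coarseRisk a v k M (coarseWeights k γ) ≤ c * fineRisk a v (k M) γ + k 1 * v := by
  have hbias := sum_blockSum_mul_one_sub_coarseWeights_sq_le ha hk0 hk.monotoneOn hγ
  have hvar := sum_blockLength_mul_coarseWeights_sq_le hM hk0 hk (by linarith) hratio hγ
  have hfineBias : 0 ≤ ∑ j ∈ Icc 1 (k M), a j * (1 - γ j) ^ 2 :=
    sum_nonneg fun j hj => mul_nonneg (ha j hj) (sq_nonneg _)
  have hcoarse : coarseRisk a v k M (coarseWeights k γ)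
      = ∑ m ∈ Icc 1 M, (∑ j ∈ Icc (k (m - 1) + 1) (k m), a j) * (1 - coarseWeights k γ m) ^ 2
        + v * ∑ m ∈ Icc 1 M, ((k m : ℝ) - k (m - 1)) * coarseWeights k γ m ^ 2 := by
    simp only [coarseRisk, sum_add_distrib, mul_sum]
    exact congrArg _ (sum_congr rfl fun m _ => by ring)
  have hfine : fineRisk a v (k M) γ
      = ∑ j ∈ Icc 1 (k M), a j * (1 - γ j) ^ 2 + v * ∑ j ∈ Icc 1 (k M), γ j ^ 2 := by
    simp only [fineRisk, sum_add_distrib, mul_sum]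
  rw [hcoarse, hfine]
  nlinarith [mul_le_mul_of_nonneg_left hvar hv, mul_nonneg (sub_nonneg.2 hc) hfineBias]

end Blocks

theorem stmt12 (M p : ℕ) (hM : 1 ≤ M) (k : ℕ → ℕ) (ζ : ℝ) (hζ : 0 ≤ ζ)
    (hk0 : k 0 = 0) (hkp : k M = p)
    (hkmono : ∀ m, m < M → k m < k (m+1))
    (hratio : ∀ m, 1 ≤ m → m ≤ M - 1 →
      ((k (m+1) : ℝ) - (k m : ℝ)) / ((k m : ℝ) - (k (m-1) : ℝ)) ≤ 1 + ζ)
    (a : ℕ → ℝ) (ha : ∀ j ∈ Finset.Icc 1 p, 0 ≤ a j) (v : ℝ) (hv : 0 < v) :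
    sInf ((fun γ : ℕ → ℝ => ∑ m ∈ Finset.Icc 1 M,
        ((∑ j ∈ Finset.Icc (k (m-1) + 1) (k m), a j) * (1 - γ m)^2
          + ((k m : ℝ) - (k (m-1) : ℝ)) * v * γ m^2)) ''
      {γ | γ 1 = 1 ∧ (∀ m, 1 ≤ m → m < M → γ (m+1) ≤ γ m) ∧ 0 ≤ γ M})
    ≤ (1 + ζ) * sInf ((fun γ : ℕ → ℝ => ∑ j ∈ Finset.Icc 1 p,
        (a j * (1 - γ j)^2 + v * γ j^2)) ''
      {γ | γ 1 = 1 ∧ (∀ j, 1 ≤ j → j < p → γ (j+1) ≤ γ j) ∧ 0 ≤ γ p})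
    + (k 1 : ℝ) * v := by
  subst hkp
  change sInf (coarseRisk a v k M '' nestedWeights M)
    ≤ (1 + ζ) * sInf (fineRisk a v (k M) '' nestedWeights (k M)) + k 1 * v
  have hk : StrictMonoOn k (Set.Iic M) :=
    strictMonoOn_Iic_of_lt_succ fun m hm => by simpa using hkmono m hm
  have hratio' : ∀ m ∈ Ico 1 M, (k (m + 1) : ℝ) - k m ≤ (1 + ζ) * ((k m : ℝ) - k (m - 1)) := by
    intro m hm
    obtain ⟨hm1, hmM⟩ := mem_Ico.1 hm
    have hd : (k (m - 1) : ℝ) < k m := by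
      exact_mod_cast hk (by simp; omega) (by simp; omega) (by omega)
    exact (div_le_iff₀ (sub_pos.2 hd)).1 (hratio m hm1 (by omega))
  have hbdd : BddBelow (coarseRisk a v k M '' nestedWeights M) :=
    ⟨0, Set.forall_mem_image.2 fun γ _ => coarseRisk_nonneg ha hk.monotoneOn hv.le γ⟩
  have hfine : (nestedWeights (k M)).Nonempty := ⟨fun _ => 1, rfl, fun _ _ _ => le_rfl, zero_le_one⟩
  refine le_mul_csInf_add (hfine.image _) (by linarith) ?_
  rintro _ ⟨γ, hγ, rfl⟩
  exact (csInf_le hbdd (Set.mem_image_of_mem _ (coarseWeights_mem hM hk0 hk hγ))).trans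
    (coarseRisk_coarseWeights_le hM hk0 hk ha hv.le (by linarith) hratio' hγ)
end

section
/- Let γ* ∈ Γ_M = {γ : 1 = γ₁ ≥ ⋯ ≥ γ_M ≥ 0} minimize R(γ) = Σ_{m=1}^M [a_m(1−γ_m)² + s_m γ_m²] over Γ_M, where a_m ≥ 0, s_m > 0. If for some index l with 2 ≤ l ≤ M−1 we have a_l/s_l < a_{l+1}/s_{l+1}, then γ*_l = γ*_{l+1}. -/
lemma sum_update_aux (M k : ℕ) (hk : k ∈ Finset.Icc 1 M) (a s γ : ℕ → ℝ) (v : ℝ) :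
    ∑ m ∈ Finset.Icc 1 M,
        (a m * (1 - Function.update γ k v m)^2 + s m * (Function.update γ k v m)^2)
      = ∑ m ∈ Finset.Icc 1 M, (a m * (1 - γ m)^2 + s m * γ m^2)
        - (a k * (1 - γ k)^2 + s k * γ k^2) + (a k * (1 - v)^2 + s k * v^2) := by
  rw [← Finset.add_sum_erase _ (fun m => a m * (1 - Function.update γ k v m)^2
        + s m * (Function.update γ k v m)^2) hk,
      ← Finset.add_sum_erase _ (fun m => a m * (1 - γ m)^2 + s m * γ m^2) hk]
  have h1 : ∀ m ∈ (Finset.Icc 1 M).erase k,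
      a m * (1 - Function.update γ k v m)^2 + s m * (Function.update γ k v m)^2
        = a m * (1 - γ m)^2 + s m * γ m^2 := by
    intro m hm
    rw [Function.update_of_ne (Finset.ne_of_mem_erase hm)]
  rw [Finset.sum_congr rfl h1, Function.update_self]
  ring

theorem stmt14 (M : ℕ) (hM : 3 ≤ M) (a s : ℕ → ℝ)
    (ha : ∀ m ∈ Finset.Icc 1 M, 0 ≤ a m) (hs : ∀ m ∈ Finset.Icc 1 M, 0 < s m)
    (γstar : ℕ → ℝ)
    (hmem : γstar 1 = 1 ∧ (∀ m, 1 ≤ m → m < M → γstar (m+1) ≤ γstar m) ∧ 0 ≤ γstar M)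
    (hmin : ∀ γ : ℕ → ℝ, γ 1 = 1 → (∀ m, 1 ≤ m → m < M → γ (m+1) ≤ γ m) → 0 ≤ γ M →
      ∑ m ∈ Finset.Icc 1 M, (a m * (1 - γstar m)^2 + s m * γstar m^2) ≤
        ∑ m ∈ Finset.Icc 1 M, (a m * (1 - γ m)^2 + s m * γ m^2))
    (l : ℕ) (hl2 : 2 ≤ l) (hlM : l ≤ M - 1)
    (hsnr : a l / s l < a (l+1) / s (l+1)) :
    γstar l = γstar (l+1) := by
  obtain ⟨h1, hmono, hM0⟩ := hmem
  have hlM' : l + 1 ≤ M := by omega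
  have hlmem : l ∈ Finset.Icc 1 M := by simp; omega
  have hl1mem : l + 1 ∈ Finset.Icc 1 M := by simp; omega
  have hal : 0 ≤ a l := ha l hlmem
  have hal1 : 0 ≤ a (l+1) := ha (l+1) hl1mem
  have hsl : 0 < s l := hs l hlmem
  have hsl1 : 0 < s (l+1) := hs (l+1) hl1mem
  by_contra hne
  have hgt : γstar (l+1) < γstar l :=
    lt_of_le_of_ne (hmono l (by omega) (by omega)) fun h => hne h.symm
  set d : ℝ := γstar l - γstar (l+1) with hd
  have hd0 : 0 < d := by simp [hd]; linarith
  -- γstar (l+1) ≥ 0 via monotone chain down to M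
  have hchain : ∀ j, l + 1 ≤ j → j ≤ M → γstar j ≤ γstar (l+1) := by
    intro j
    induction j with
    | zero => intro h; omega
    | succ n ih =>
      intro hj1 hj2
      rcases Nat.eq_or_lt_of_le hj1 with h | h
      · rw [← h]
      · exact le_trans (hmono n (by omega) (by omega)) (ih (by omega) (by omega))
  have hγ1pos : 0 ≤ γstar (l+1) := le_trans hM0 (hchain M hlM' le_rfl)
  -- Perturbation 1: decrease γstar l by ε
  have ineq1 : ∀ ε : ℝ, 0 < ε → ε ≤ d →
      0 ≤ 2 * ε * (a l * (1 - γstar l) - s l * γstar l) + ε^2 * (a l + s l) := by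
    intro ε hε0 hεd
    set γ' := Function.update γstar l (γstar l - ε) with hγ'
    have hfeas1 : γ' 1 = 1 := by
      rw [hγ', Function.update_of_ne (by omega)]; exact h1
    have hfeas2 : ∀ m, 1 ≤ m → m < M → γ' (m+1) ≤ γ' m := by
      intro m hm1 hmM
      by_cases hml : m + 1 = l
      · have e1 : γ' (m+1) = γstar l - ε := by rw [hγ', hml, Function.update_self]
        have e2 : γ' m = γstar m := by rw [hγ', Function.update_of_ne (by omega)]
        have := hmono m hm1 hmM
        rw [hml] at this
        rw [e1, e2]
        linarith
      · by_cases hml2 : m = l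
        · rw [hγ', Function.update_of_ne (by omega), hml2, Function.update_self]
          linarith [hd0, hεd]
        · rw [hγ', Function.update_of_ne (by omega), Function.update_of_ne (by omega)]
          exact hmono m hm1 hmM
    have hfeas3 : 0 ≤ γ' M := by
      rw [hγ', Function.update_of_ne (by omega)]; exact hM0
    have := hmin γ' hfeas1 hfeas2 hfeas3
    rw [hγ', sum_update_aux M l hlmem] at this
    nlinarith [this]
  -- Perturbation 2: increase γstar (l+1) by ε
  have ineq2 : ∀ ε : ℝ, 0 < ε → ε ≤ d →
      0 ≤ 2 * ε * (s (l+1) * γstar (l+1) - a (l+1) * (1 - γstar (l+1)))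
        + ε^2 * (a (l+1) + s (l+1)) := by
    intro ε hε0 hεd
    set γ' := Function.update γstar (l+1) (γstar (l+1) + ε) with hγ'
    have hfeas1 : γ' 1 = 1 := by
      rw [hγ', Function.update_of_ne (by omega)]; exact h1
    have hfeas2 : ∀ m, 1 ≤ m → m < M → γ' (m+1) ≤ γ' m := by
      intro m hm1 hmM
      by_cases hml : m = l
      · have e1 : γ' (m+1) = γstar (l+1) + ε := by rw [hγ', hml, Function.update_self]
        have e2 : γ' m = γstar l := by
          rw [hγ', Function.update_of_ne (by omega), hml]
        rw [e1, e2]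
        linarith
      · by_cases hml2 : m = l + 1
        · rw [hγ', Function.update_of_ne (by omega), hml2, Function.update_self]
          have := hmono (l+1) (by omega) (by omega)
          linarith
        · rw [hγ', Function.update_of_ne (by omega), Function.update_of_ne (by omega)]
          exact hmono m hm1 hmM
    have hfeas3 : 0 ≤ γ' M := by
      by_cases hML : l + 1 = M
      · rw [hγ', ← hML, Function.update_self]; linarith
      · rw [hγ', Function.update_of_ne (by omega)]; exact hM0
    have := hmin γ' hfeas1 hfeas2 hfeas3
    rw [hγ', sum_update_aux M (l+1) hl1mem] at this
    nlinarith [this]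
  -- Deduce the two first-order conditions
  have key1 : 0 ≤ a l * (1 - γstar l) - s l * γstar l := by
    by_contra h
    push_neg at h
    set K := a l * (1 - γstar l) - s l * γstar l with hK
    have hC : 0 < a l + s l := by linarith
    set ε := min d (-K / (a l + s l)) with hε
    have hε0 : 0 < ε := lt_min hd0 (div_pos (by linarith) hC)
    have hεd : ε ≤ d := min_le_left _ _
    have hε2 : ε ≤ -K / (a l + s l) := min_le_right _ _
    have h2 : ε * (a l + s l) ≤ -K := by
      rw [← le_div_iff₀ hC]; exact hε2
    have := ineq1 ε hε0 hεd
    nlinarith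
  have key2 : 0 ≤ s (l+1) * γstar (l+1) - a (l+1) * (1 - γstar (l+1)) := by
    by_contra h
    push_neg at h
    set K := s (l+1) * γstar (l+1) - a (l+1) * (1 - γstar (l+1)) with hK
    have hC : 0 < a (l+1) + s (l+1) := by linarith
    set ε := min d (-K / (a (l+1) + s (l+1))) with hε
    have hε0 : 0 < ε := lt_min hd0 (div_pos (by linarith) hC)
    have hεd : ε ≤ d := min_le_left _ _
    have hε2 : ε ≤ -K / (a (l+1) + s (l+1)) := min_le_right _ _
    have h2 : ε * (a (l+1) + s (l+1)) ≤ -K := by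
      rw [← le_div_iff₀ hC]; exact hε2
    have := ineq2 ε hε0 hεd
    nlinarith
  -- contradiction with SNR condition
  have hcross : a l * s (l+1) < a (l+1) * s l := by
    rw [div_lt_div_iff₀ hsl hsl1] at hsnr
    linarith
  have p1 : 0 ≤ (a l * (1 - γstar l) - s l * γstar l) * (a (l+1) + s (l+1)) :=
    mul_nonneg key1 (by linarith)
  have p2 : 0 ≤ (s (l+1) * γstar (l+1) - a (l+1) * (1 - γstar (l+1))) * (a l + s l) :=
    mul_nonneg key2 (by linarith)
  have p3 : (γstar (l+1) - γstar l) * ((a l + s l) * (a (l+1) + s (l+1))) ≤ 0 :=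
    mul_nonpos_of_nonpos_of_nonneg (by linarith) (by positivity)
  nlinarith [p1, p2, p3, hcross]
end

section
/- Let R(γ) = Σ_{m=1}^M [a_m(1−γ_m)² + s_m γ_m²] with a_m ≥ 0, s_m > 0, and suppose for some l (2 ≤ l ≤ M−1) that a_l/s_l < a_{l+1}/s_{l+1} and γ ∈ Γ_M satisfies γ_l > γ_{l+1}. Define γ' to agree with γ except in coordinates l and l+1: if γ_l ≤ a_l/(a_l+s_l), set γ'_l = γ'_{l+1} = γ_l; otherwise set γ'_l = max(γ_{l+1}, a_l/(a_l+s_l)) and γ'_{l+1} = γ_{l+1}. Then in either case γ' ∈ Γ_M and R(γ') < R(γ). -/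
lemma quadA (a s x y : ℝ) (hxy : x < y) (h : (a+s)*(x+y) < 2*a) :
    a*(1-y)^2 + s*y^2 < a*(1-x)^2 + s*x^2 := by
  nlinarith [mul_pos (sub_pos.2 hxy) (by linarith : (0:ℝ) < 2*a - (a+s)*(x+y))]

lemma quadB (a s x y : ℝ) (hxy : x < y) (h : 2*a < (a+s)*(x+y)) :
    a*(1-x)^2 + s*x^2 < a*(1-y)^2 + s*y^2 := by
  nlinarith [mul_pos (sub_pos.2 hxy) (by linarith : (0:ℝ) < (a+s)*(x+y) - 2*a)]

theorem stmt19 (M : ℕ) (hM : 3 ≤ M) (a s : ℕ → ℝ)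
    (ha : ∀ m ∈ Finset.Icc 1 M, 0 ≤ a m) (hs : ∀ m ∈ Finset.Icc 1 M, 0 < s m)
    (l : ℕ) (hl2 : 2 ≤ l) (hlM : l ≤ M - 1)
    (hsnr : a l / s l < a (l+1) / s (l+1))
    (γ : ℕ → ℝ)
    (hγ : γ 1 = 1 ∧ (∀ m, 1 ≤ m → m < M → γ (m+1) ≤ γ m) ∧ 0 ≤ γ M)
    (hgap : γ (l+1) < γ l)
    (γ' : ℕ → ℝ)
    (hγ' : γ' = fun m =>
      if m = l then
        (if γ l ≤ a l / (a l + s l) then γ l else max (γ (l+1)) (a l / (a l + s l)))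
      else if m = l + 1 then
        (if γ l ≤ a l / (a l + s l) then γ l else γ (l+1))
      else γ m) :
    (γ' 1 = 1 ∧ (∀ m, 1 ≤ m → m < M → γ' (m+1) ≤ γ' m) ∧ 0 ≤ γ' M) ∧
    ∑ m ∈ Finset.Icc 1 M, (a m * (1 - γ' m)^2 + s m * γ' m^2) <
      ∑ m ∈ Finset.Icc 1 M, (a m * (1 - γ m)^2 + s m * γ m^2) := by
  obtain ⟨hγ1, hmono, hγM⟩ := hγ
  have hlm : l ∈ Finset.Icc 1 M := by simp; omega
  have hl1m : l + 1 ∈ Finset.Icc 1 M := by simp; omega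
  have hsl := hs l hlm
  have hal := ha l hlm
  have hsl1 := hs (l+1) hl1m
  have hal1 := ha (l+1) hl1m
  have hden : 0 < a l + s l := by linarith
  have hden1 : 0 < a (l+1) + s (l+1) := by linarith
  set t : ℝ := a l / (a l + s l) with htdef
  have ht0 : 0 ≤ t := div_nonneg hal hden.le
  have htt : t < a (l+1) / (a (l+1) + s (l+1)) := by
    rw [div_lt_div_iff₀ hsl hsl1] at hsnr
    rw [htdef, div_lt_div_iff₀ hden hden1]
    nlinarith
  have hgl : γ' l = if γ l ≤ t then γ l else max (γ (l+1)) t := by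
    rw [hγ']; simp
  have hgl1 : γ' (l+1) = if γ l ≤ t then γ l else γ (l+1) := by
    rw [hγ']; simp [show l + 1 ≠ l from by omega]
  have hother : ∀ x, x ≠ l → x ≠ l + 1 → γ' x = γ x := by
    intro x h1 h2; rw [hγ']; simp [h1, h2]
  constructor
  · refine ⟨?_, ?_, ?_⟩
    · rw [hother 1 (by omega) (by omega), hγ1]
    · intro m hm1 hmM
      by_cases h1 : m + 1 = l
      · rw [hother m (by omega) (by omega), h1, hgl]
        have hle : γ l ≤ γ m := by have := hmono m hm1 hmM; rwa [h1] at this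
        by_cases hA : γ l ≤ t
        · rw [if_pos hA]; exact hle
        · rw [if_neg hA]; push_neg at hA
          exact max_le (le_trans hgap.le hle) (by linarith)
      · by_cases h2 : m = l
        · rw [h2, hgl, hgl1]
          by_cases hA : γ l ≤ t
          · rw [if_pos hA, if_pos hA]
          · rw [if_neg hA, if_neg hA]; exact le_max_left _ _
        · by_cases h3 : m = l + 1
          · rw [h3, hother (l+1+1) (by omega) (by omega), hgl1]
            have hlt : l + 1 < M := h3 ▸ hmM
            have hle : γ (l+1+1) ≤ γ (l+1) := hmono (l+1) (by omega) hlt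
            by_cases hA : γ l ≤ t
            · rw [if_pos hA]; linarith
            · rw [if_neg hA]; exact hle
          · rw [hother m h2 h3, hother (m+1) h1 (by omega)]
            exact hmono m hm1 hmM
    · by_cases hMl : M = l + 1
      · rw [hMl, hgl1]
        rw [hMl] at hγM
        by_cases hA : γ l ≤ t
        · rw [if_pos hA]; linarith
        · rw [if_neg hA]; exact hγM
      · rw [hother M (by omega) hMl]; exact hγM
  · by_cases hA : γ l ≤ t
    · -- only index l+1 changes, from γ(l+1) to γ l
      have hkey : a (l+1) * (1 - γ' (l+1))^2 + s (l+1) * (γ' (l+1))^2 <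
          a (l+1) * (1 - γ (l+1))^2 + s (l+1) * (γ (l+1))^2 := by
        rw [hgl1, if_pos hA]
        have hx : γ (l+1) * (a (l+1) + s (l+1)) < a (l+1) := by
          have h : γ (l+1) < a (l+1) / (a (l+1) + s (l+1)) := by linarith
          exact (lt_div_iff₀ hden1).1 h
        have hy : γ l * (a (l+1) + s (l+1)) ≤ a (l+1) := by
          have h : γ l ≤ a (l+1) / (a (l+1) + s (l+1)) := le_of_lt (lt_of_le_of_lt hA htt)
          exact (le_div_iff₀ hden1).1 h
        exact quadA (a (l+1)) (s (l+1)) (γ (l+1)) (γ l) hgap (by nlinarith)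
      refine Finset.sum_lt_sum ?_ ⟨l+1, hl1m, hkey⟩
      intro i hi
      by_cases h1 : i = l
      · rw [h1, hgl, if_pos hA]
      · by_cases h2 : i = l + 1
        · rw [h2]; exact hkey.le
        · rw [hother i h1 h2]
    · -- only index l changes, from γ l to max (γ (l+1)) t
      push_neg at hA
      have htmul : t * (a l + s l) = a l := by rw [htdef]; field_simp
      have hkey : a l * (1 - γ' l)^2 + s l * (γ' l)^2 <
          a l * (1 - γ l)^2 + s l * (γ l)^2 := by
        rw [hgl, if_neg (not_le.2 hA)]
        apply quadB _ _ _ _ (max_lt hgap hA)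
        have h1 : a l ≤ (a l + s l) * max (γ (l+1)) t := by
          nlinarith [le_max_right (γ (l+1)) t]
        have h2 : a l < (a l + s l) * γ l := by nlinarith
        linarith
      refine Finset.sum_lt_sum ?_ ⟨l, hlm, hkey⟩
      intro i hi
      by_cases h1 : i = l
      · rw [h1]; exact hkey.le
      · by_cases h2 : i = l + 1
        · rw [h2, hgl1, if_neg (not_le.2 hA)]
        · rw [hother i h1 h2]
end
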